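/- arXiv:1502.07191 — 2 statements merged into one kernel-verified Lean document; each statement's English description precedes it below -/
import Mathlib

section
/- Let m ≥ 2 be an even integer and let α ∈ ℂ. Then ∑_{j=1}^{m−1} (α, j−1)·(α, m−j−1)·λ_{j,m−j} = ((4α² + 2m − 1)/m)·(α, m−1), where λ_{j,k} := (−1)^{j−1}(4α² + 4jk − 1)(4α² − (2j−1)(2k−1))/(8jk). -/
/-- The bracket symbol `(α, m) = (∏_{n=1}^m (4α² - (2n-1)²)) / (2^{2m} m!)`. -/
noncomputable def jbracket (α : ℂ) (m : ℕ) : ℂ :=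
  (∏ n ∈ Finset.Icc 1 m, (4 * α ^ 2 - (2 * (n : ℂ) - 1) ^ 2)) / (2 ^ (2 * m) * m.factorial)

/-- `λ_{j,k} = (-1)^{j-1} (4α² + 4jk - 1)(4α² - (2j-1)(2k-1)) / (8jk)`. -/
noncomputable def lamjk (α : ℂ) (j k : ℕ) : ℂ :=
  (-1) ^ (j - 1) * (4 * α ^ 2 + 4 * (j : ℂ) * (k : ℂ) - 1) *
    (4 * α ^ 2 - (2 * (j : ℂ) - 1) * (2 * (k : ℂ) - 1)) / (8 * (j : ℂ) * (k : ℂ))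

lemma jbracket_zero (α : ℂ) : jbracket α 0 = 1 := by
  simp [jbracket]

lemma jbracket_succ (α : ℂ) (n : ℕ) :
    jbracket α (n + 1) = jbracket α n * (4 * α ^ 2 - (2 * (n : ℂ) + 1) ^ 2) / (4 * ((n : ℂ) + 1)) := by
  have h1 : ((n.factorial : ℂ)) ≠ 0 := Nat.cast_ne_zero.mpr n.factorial_ne_zero
  have h2 : ((2 : ℂ)) ^ (2 * n) ≠ 0 := pow_ne_zero _ two_ne_zero
  have h3 : ((n : ℂ) + 1) ≠ 0 := Nat.cast_add_one_ne_zero n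
  rw [jbracket, jbracket, Finset.prod_Icc_succ_top (Nat.le_add_left 1 n)]
  rw [Nat.factorial_succ]
  push_cast
  rw [mul_add 2 n 1, pow_add]
  field_simp
  ring

/-- The Gosper-style antidifference certificate. -/
noncomputable def Gcert (α : ℂ) (m j : ℕ) : ℂ :=
  (-1) ^ (j - 1) * jbracket α (j - 1) * jbracket α (m - j - 1) *
    (16 * (j : ℂ) ^ 4 - 16 * (m : ℂ) * (j : ℂ) ^ 3
      + 8 * ((m : ℂ) - 1 - 4 * α ^ 2) * (j : ℂ) ^ 2
      + 4 * (m : ℂ) * (4 * α ^ 2 + 1) * (j : ℂ)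
      + (4 * α ^ 2 - 1) ^ 2 + 2 * (4 * α ^ 2 - 1) * (m : ℂ)) / (8 * (m : ℂ) * (j : ℂ))

set_option maxHeartbeats 2000000 in
lemma key (α x y : ℂ) (hx1 : x + 1 ≠ 0) (hx2 : x + 2 ≠ 0) (hy1 : y + 1 ≠ 0)
    (hm : x + y + 3 ≠ 0) :
    (4 * α ^ 2 - (2 * x + 1) ^ 2) / (4 * (x + 1)) *
        ((-1) * (4 * α ^ 2 + 4 * (x + 2) * (y + 1) - 1) *
          (4 * α ^ 2 - (2 * (x + 2) - 1) * (2 * (y + 1) - 1)) / (8 * (x + 2) * (y + 1)))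
      = (-1) * ((4 * α ^ 2 - (2 * x + 1) ^ 2) / (4 * (x + 1))) *
          ((16 * (x + 2) ^ 4 - 16 * (x + y + 3) * (x + 2) ^ 3
            + 8 * ((x + y + 3) - 1 - 4 * α ^ 2) * (x + 2) ^ 2
            + 4 * (x + y + 3) * (4 * α ^ 2 + 1) * (x + 2)
            + (4 * α ^ 2 - 1) ^ 2 + 2 * (4 * α ^ 2 - 1) * (x + y + 3))
            / (8 * (x + y + 3) * (x + 2)))
        - (4 * α ^ 2 - (2 * y + 1) ^ 2) / (4 * (y + 1)) *
          ((16 * (x + 1) ^ 4 - 16 * (x + y + 3) * (x + 1) ^ 3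
            + 8 * ((x + y + 3) - 1 - 4 * α ^ 2) * (x + 1) ^ 2
            + 4 * (x + y + 3) * (4 * α ^ 2 + 1) * (x + 1)
            + (4 * α ^ 2 - 1) ^ 2 + 2 * (4 * α ^ 2 - 1) * (x + y + 3))
            / (8 * (x + 1) * (x + y + 3))) := by
  have hD1 : 4 * (x + 1) * (8 * (x + 2) * (y + 1)) ≠ 0 :=
    mul_ne_zero (mul_ne_zero (by norm_num) hx1)
      (mul_ne_zero (mul_ne_zero (by norm_num) hx2) hy1)
  have hD2 : 4 * (x + 1) * (8 * (x + y + 3) * (x + 2)) ≠ 0 :=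
    mul_ne_zero (mul_ne_zero (by norm_num) hx1)
      (mul_ne_zero (mul_ne_zero (by norm_num) hm) hx2)
  have hD3 : 4 * (y + 1) * (8 * (x + 1) * (x + y + 3)) ≠ 0 :=
    mul_ne_zero (mul_ne_zero (by norm_num) hy1)
      (mul_ne_zero (mul_ne_zero (by norm_num) hx1) hm)
  rw [div_mul_div_comm, div_mul_div_comm,
    mul_assoc (-1:ℂ) ((4 * α ^ 2 - (2 * x + 1) ^ 2) / (4 * (x + 1))) _, div_mul_div_comm,
    neg_one_mul, neg_one_mul, ← neg_div, div_sub_div _ _ hD2 hD3,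
    div_eq_div_iff hD1 (mul_ne_zero hD2 hD3)]
  ring

set_option maxHeartbeats 2000000 in
lemma tele (α : ℂ) (p q : ℕ) :
    jbracket α (p + 1) * jbracket α q * lamjk α (p + 2) (q + 1)
      = Gcert α (p + q + 3) (p + 2) - Gcert α (p + q + 3) (p + 1) := by
  have hp1 : ((p : ℂ) + 1) ≠ 0 := Nat.cast_add_one_ne_zero p
  have hq1 : ((q : ℂ) + 1) ≠ 0 := Nat.cast_add_one_ne_zero q
  have hp2 : ((p : ℂ) + 2) ≠ 0 := by
    have h := Nat.cast_add_one_ne_zero (R := ℂ) (p + 1); push_cast at h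
    intro h0; exact h (by linear_combination h0)
  have hm : ((p : ℂ) + (q : ℂ) + 3) ≠ 0 := by
    have h := Nat.cast_add_one_ne_zero (R := ℂ) (p + q + 2); push_cast at h
    intro h0; exact h (by linear_combination h0)
  rw [Gcert, Gcert, lamjk, show p + 2 - 1 = p + 1 from rfl, show p + 1 - 1 = p from rfl,
    show p + q + 3 - (p + 2) - 1 = q by omega, show p + q + 3 - (p + 1) - 1 = q + 1 by omega,
    jbracket_succ α p, jbracket_succ α q]
  push_cast
  rw [pow_succ]
  linear_combination ((-1 : ℂ) ^ p * jbracket α p * jbracket α q) * key α p q hp1 hp2 hq1 hm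

set_option maxHeartbeats 2000000 in
lemma key2 (α z : ℂ) (h1 : z + 1 ≠ 0) (h2 : z + 2 ≠ 0) :
    (4 * α ^ 2 + 4 * (z + 1) - 1) * (4 * α ^ 2 - (2 * (z + 1) - 1)) / (8 * (z + 1))
      + (16 * (z + 1) ^ 4 - 16 * (z + 2) * (z + 1) ^ 3
          + 8 * ((z + 2) - 1 - 4 * α ^ 2) * (z + 1) ^ 2
          + 4 * (z + 2) * (4 * α ^ 2 + 1) * (z + 1)
          + (4 * α ^ 2 - 1) ^ 2 + 2 * (4 * α ^ 2 - 1) * (z + 2)) / (8 * (z + 2) * (z + 1))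
      - (16 - 16 * (z + 2) + 8 * ((z + 2) - 1 - 4 * α ^ 2)
          + 4 * (z + 2) * (4 * α ^ 2 + 1)
          + (4 * α ^ 2 - 1) ^ 2 + 2 * (4 * α ^ 2 - 1) * (z + 2)) / (8 * (z + 2))
      = (4 * α ^ 2 + 2 * (z + 2) - 1) / (z + 2) * ((4 * α ^ 2 - (2 * z + 1) ^ 2) / (4 * (z + 1))) := by
  have hA : (8 : ℂ) * (z + 1) ≠ 0 := mul_ne_zero (by norm_num) h1
  have hB : (8 : ℂ) * (z + 2) * (z + 1) ≠ 0 := mul_ne_zero (mul_ne_zero (by norm_num) h2) h1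
  have hC : (8 : ℂ) * (z + 2) ≠ 0 := mul_ne_zero (by norm_num) h2
  have hD : (z + 2) * (4 * (z + 1)) ≠ 0 := mul_ne_zero h2 (mul_ne_zero (by norm_num) h1)
  rw [div_mul_div_comm, div_add_div _ _ hA hB, div_sub_div _ _ (mul_ne_zero hA hB) hC,
    div_eq_div_iff (mul_ne_zero (mul_ne_zero hA hB) hC) hD]
  ring

/-- for even `m ≥ 2`,
`∑_{j=1}^{m-1} (α,j-1)(α,m-j-1) λ_{j,m-j} = ((4α²+2m-1)/m) (α,m-1)`. -/
theorem hypergeometric_sum_identity (α : ℂ) (m : ℕ) (hm : 2 ≤ m) (hme : Even m) :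
    ∑ j ∈ Finset.Icc 1 (m - 1),
        jbracket α (j - 1) * jbracket α (m - j - 1) * lamjk α j (m - j)
      = ((4 * α ^ 2 + 2 * (m : ℂ) - 1) / (m : ℂ)) * jbracket α (m - 1) := by
  obtain ⟨n, rfl⟩ : ∃ n, m = n + 2 := ⟨m - 2, by omega⟩
  have hn : Even n := by
    rcases hme with ⟨k, hk⟩; exact ⟨k - 1, by omega⟩
  have h1 : ((n : ℂ) + 1) ≠ 0 := Nat.cast_add_one_ne_zero n
  have h2 : ((n : ℂ) + 2) ≠ 0 := by
    have h := Nat.cast_add_one_ne_zero (R := ℂ) (n + 1); push_cast at h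
    intro h0; exact h (by linear_combination h0)
  rw [show n + 2 - 1 = n + 1 by omega]
  rw [← Finset.Ico_add_one_right_eq_Icc, Finset.sum_Ico_eq_sum_range, show n + 1 + 1 - 1 = n + 1 by omega]
  rw [Finset.sum_range_succ']
  have tsum : ∑ i ∈ Finset.range n,
      (jbracket α (1 + (i + 1) - 1) * jbracket α (n + 2 - (1 + (i + 1)) - 1) *
        lamjk α (1 + (i + 1)) (n + 2 - (1 + (i + 1))))
      = Gcert α (n + 2) (n + 1) - Gcert α (n + 2) 1 := by
    have step : ∀ i ∈ Finset.range n,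
        jbracket α (1 + (i + 1) - 1) * jbracket α (n + 2 - (1 + (i + 1)) - 1) *
          lamjk α (1 + (i + 1)) (n + 2 - (1 + (i + 1)))
        = Gcert α (n + 2) (i + 1 + 1) - Gcert α (n + 2) (i + 1) := by
      intro i hi
      have hin : i < n := Finset.mem_range.1 hi
      rw [show 1 + (i + 1) - 1 = i + 1 by omega,
        show n + 2 - (1 + (i + 1)) - 1 = n - 1 - i by omega,
        show n + 2 - (1 + (i + 1)) = (n - 1 - i) + 1 by omega,
        show 1 + (i + 1) = i + 2 by omega,
        show i + 1 + 1 = i + 2 by omega,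
        show n + 2 = i + (n - 1 - i) + 3 by omega]
      exact tele α i (n - 1 - i)
    rw [Finset.sum_congr rfl step]
    exact Finset.sum_range_sub (fun i => Gcert α (n + 2) (i + 1)) n
  rw [tsum]
  rw [show (1 : ℕ) + 0 - 1 = 0 by omega, show n + 2 - (1 + 0) - 1 = n by omega,
    show (1 : ℕ) + 0 = 1 by omega, show n + 2 - 1 = n + 1 by omega]
  rw [Gcert, Gcert, lamjk, jbracket_zero,
    show n + 1 - 1 = n by omega, show n + 2 - (n + 1) - 1 = 0 by omega,
    show (1 : ℕ) - 1 = 0 by omega, show n + 2 - 1 - 1 = n by omega,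
    jbracket_zero, jbracket_succ α n, hn.neg_one_pow, pow_zero]
  push_cast
  linear_combination (jbracket α n) * key2 α (n : ℂ) h1 h2
end

section
/- Let R > 1 be real, n ≥ 0 an integer, and g : ℂ → ℂ a function that is continuous on the circle {|ζ| = R} and satisfies g(−ζ) = g(ζ) for all ζ with |ζ| = R. Then ∮_{|ζ|=R} g(ζ) / ((ζ−1)^{1/2}(ζ+1)^{1/2}·(ζ+1)^{n+1}) dζ = (−1)^{n+1} · ∮_{|ζ|=R} g(ζ) / ((ζ−1)^{1/2}(ζ+1)^{1/2}·(ζ−1)^{n+1}) dζ, where both integrals are over the positively oriented circle of radius R centered at 0 and each square root is the principal complex square root. -/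
/-!
The substitution `ζ ↦ -ζ` maps the positively oriented circle `|ζ| = R` onto itself and turns
`dζ` into `-dζ`. Off the real segment `[-1, 1]` the principal square roots of `-(ζ + 1)` and
`-(ζ - 1)` are those of `ζ + 1` and `ζ - 1` multiplied by the same factor `±i`, so the branch
`(ζ - 1)^{1/2} (ζ + 1)^{1/2}` is odd there. Hence the integrand with `(ζ + 1)^{n+1}`, evaluated
at `-ζ`, is `(-1)^n` times the integrand with `(ζ - 1)^{n+1}`.
-/

open Complex Metric
open scoped Real

theorem circleMap_zero_add_pi (R θ : ℝ) : circleMap 0 R (θ + π) = -circleMap 0 R θ := by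
  simp only [circleMap, zero_add, ofReal_add, add_mul, exp_add, exp_pi_mul_I]
  ring

theorem circleIntegral.integral_comp_neg {E : Type*} [NormedAddCommGroup E] [NormedSpace ℂ E]
    (f : ℂ → E) (R : ℝ) : (∮ z in C(0, R), f (-z)) = -∮ z in C(0, R), f z := by
  set F : ℝ → E := fun θ => deriv (circleMap 0 R) θ • f (circleMap 0 R θ)
  have hF : Function.Periodic F (2 * π) := fun θ => by
    simp only [F, periodic_circleMap 0 R θ, deriv_circleMap]
  calc (∮ z in C(0, R), f (-z)) = ∫ θ in (0)..2 * π, -F (θ + π) := by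
        refine intervalIntegral.integral_congr fun θ _ => ?_
        simp only [F, deriv_circleMap, circleMap_zero_add_pi, neg_mul, neg_smul, neg_neg]
    _ = -∮ z in C(0, R), f z := by
        rw [intervalIntegral.integral_neg, intervalIntegral.integral_comp_add_right,
          zero_add, add_comm, hF.intervalIntegral_add_eq π 0, zero_add]
        rfl

namespace Complex

theorem log_neg_of_arg_neg_eq_arg_sub_pi {x : ℂ} (h : arg (-x) = arg x - π) :
    log (-x) = log x - π * I := by
  apply Complex.ext <;> simp [log_re, log_im, h]

theorem log_neg_of_arg_neg_eq_arg_add_pi {x : ℂ} (h : arg (-x) = arg x + π) :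
    log (-x) = log x + π * I := by
  apply Complex.ext <;> simp [log_re, log_im, h]

theorem neg_cpow_of_arg_neg_eq_arg_sub_pi {x : ℂ} (h : arg (-x) = arg x - π) (s : ℂ) :
    (-x) ^ s = exp (-(π * s * I)) * x ^ s := by
  have hx : x ≠ 0 := by rintro rfl; simp [Real.pi_ne_zero] at h
  rw [cpow_def_of_ne_zero (neg_ne_zero.2 hx), cpow_def_of_ne_zero hx,
    log_neg_of_arg_neg_eq_arg_sub_pi h, ← exp_add]
  ring_nf

theorem neg_cpow_of_arg_neg_eq_arg_add_pi {x : ℂ} (h : arg (-x) = arg x + π) (s : ℂ) :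
    (-x) ^ s = exp (π * s * I) * x ^ s := by
  have hx : x ≠ 0 := by rintro rfl; simp [eq_comm, Real.pi_ne_zero] at h
  rw [cpow_def_of_ne_zero (neg_ne_zero.2 hx), cpow_def_of_ne_zero hx,
    log_neg_of_arg_neg_eq_arg_add_pi h, ← exp_add]
  ring_nf

theorem neg_cpow_half_of_arg_neg_eq_arg_sub_pi {x : ℂ} (h : arg (-x) = arg x - π) :
    (-x) ^ (1 / 2 : ℂ) = -I * x ^ (1 / 2 : ℂ) := by
  rw [neg_cpow_of_arg_neg_eq_arg_sub_pi h, show -((π : ℂ) * (1 / 2) * I) = -π / 2 * I by ring,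
    exp_neg_pi_div_two_mul_I]

theorem neg_cpow_half_of_arg_neg_eq_arg_add_pi {x : ℂ} (h : arg (-x) = arg x + π) :
    (-x) ^ (1 / 2 : ℂ) = I * x ^ (1 / 2 : ℂ) := by
  rw [neg_cpow_of_arg_neg_eq_arg_add_pi h, show (π : ℂ) * (1 / 2) * I = π / 2 * I by ring,
    exp_pi_div_two_mul_I]

theorem im_ne_zero_or_one_lt_abs_re_of_one_lt_norm {ζ : ℂ} (hζ : 1 < ‖ζ‖) :
    ζ.im ≠ 0 ∨ 1 < |ζ.re| :=
  or_iff_not_imp_left.2 fun h => (abs_re_eq_norm.2 (not_not.1 h)).symm ▸ hζ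

theorem arg_neg_add_one_and_sub_one_eq_sub_pi_or_add_pi {ζ : ℂ} (hζ : ζ.im ≠ 0 ∨ 1 < |ζ.re|) :
    (arg (-(ζ + 1)) = arg (ζ + 1) - π ∧ arg (-(ζ - 1)) = arg (ζ - 1) - π) ∨
      (arg (-(ζ + 1)) = arg (ζ + 1) + π ∧ arg (-(ζ - 1)) = arg (ζ - 1) + π) := by
  simp only [arg_neg_eq_arg_sub_pi_iff, arg_neg_eq_arg_add_pi_iff, add_im, sub_im, one_im,
    add_re, sub_re, one_re, add_zero, sub_zero]
  rcases lt_trichotomy ζ.im 0 with h | h | h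
  · simp [h, h.not_gt]
  · rcases lt_abs.1 (hζ.resolve_left (not_not.2 h)) with h' | h'
    · right; constructor <;> right <;> constructor <;> linarith
    · left; constructor <;> right <;> constructor <;> linarith
  · simp [h, h.not_gt]

theorem cpow_half_mul_cpow_half_neg {ζ : ℂ} (hζ : ζ.im ≠ 0 ∨ 1 < |ζ.re|) :
    (-ζ - 1) ^ (1 / 2 : ℂ) * (-ζ + 1) ^ (1 / 2 : ℂ)
      = -((ζ - 1) ^ (1 / 2 : ℂ) * (ζ + 1) ^ (1 / 2 : ℂ)) := by
  rw [show -ζ - 1 = -(ζ + 1) by ring, show -ζ + 1 = -(ζ - 1) by ring]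
  rcases arg_neg_add_one_and_sub_one_eq_sub_pi_or_add_pi hζ with ⟨h₁, h₂⟩ | ⟨h₁, h₂⟩
  · rw [neg_cpow_half_of_arg_neg_eq_arg_sub_pi h₁, neg_cpow_half_of_arg_neg_eq_arg_sub_pi h₂]
    linear_combination ((ζ - 1) ^ (1 / 2 : ℂ) * (ζ + 1) ^ (1 / 2 : ℂ)) * I_mul_I
  · rw [neg_cpow_half_of_arg_neg_eq_arg_add_pi h₁, neg_cpow_half_of_arg_neg_eq_arg_add_pi h₂]
    linear_combination ((ζ - 1) ^ (1 / 2 : ℂ) * (ζ + 1) ^ (1 / 2 : ℂ)) * I_mul_I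

theorem cpow_half_mul_cpow_half_mul_pow_neg {ζ : ℂ} (hζ : ζ.im ≠ 0 ∨ 1 < |ζ.re|) (n : ℕ) :
    (-ζ - 1) ^ (1 / 2 : ℂ) * (-ζ + 1) ^ (1 / 2 : ℂ) * (-ζ + 1) ^ (n + 1)
      = (-1) ^ n * ((ζ - 1) ^ (1 / 2 : ℂ) * (ζ + 1) ^ (1 / 2 : ℂ) * (ζ - 1) ^ (n + 1)) := by
  rw [cpow_half_mul_cpow_half_neg hζ, show -ζ + 1 = -(ζ - 1) by ring, neg_pow, pow_succ]
  ring

end Complex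

theorem circle_integral_even_symmetry_general (R : ℝ) (hR : 1 < R) (n : ℕ) (g : ℂ → ℂ)
    (hge : ∀ ζ : ℂ, ‖ζ‖ = R → g (-ζ) = g ζ) :
    (∮ ζ in C(0, R), g ζ /
        ((ζ - 1) ^ (1 / 2 : ℂ) * (ζ + 1) ^ (1 / 2 : ℂ) * (ζ + 1) ^ (n + 1)))
      = (-1) ^ (n + 1) *
        ∮ ζ in C(0, R), g ζ /
          ((ζ - 1) ^ (1 / 2 : ℂ) * (ζ + 1) ^ (1 / 2 : ℂ) * (ζ - 1) ^ (n + 1)) := by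
  set f₁ : ℂ → ℂ := fun ζ => g ζ /
    ((ζ - 1) ^ (1 / 2 : ℂ) * (ζ + 1) ^ (1 / 2 : ℂ) * (ζ + 1) ^ (n + 1))
  set f₂ : ℂ → ℂ := fun ζ => g ζ /
    ((ζ - 1) ^ (1 / 2 : ℂ) * (ζ + 1) ^ (1 / 2 : ℂ) * (ζ - 1) ^ (n + 1))
  have hodd : Set.EqOn (fun ζ => f₁ (-ζ)) (fun ζ => (-1) ^ n * f₂ ζ) (sphere 0 R) := by
    intro ζ hζ
    rw [mem_sphere_zero_iff_norm] at hζ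
    have hcut := im_ne_zero_or_one_lt_abs_re_of_one_lt_norm (hζ ▸ hR)
    simp only [f₁, f₂]
    rw [hge ζ hζ, cpow_half_mul_cpow_half_mul_pow_neg hcut, div_mul_eq_div_div_swap,
      div_eq_mul_inv _ ((-1) ^ n), ← inv_pow, inv_neg_one, mul_comm]
  calc (∮ ζ in C(0, R), f₁ ζ) = -∮ ζ in C(0, R), f₁ (-ζ) := by
        rw [circleIntegral.integral_comp_neg, neg_neg]
    _ = (-1) ^ (n + 1) * ∮ ζ in C(0, R), f₂ ζ := by
        rw [circleIntegral.integral_congr (by linarith) hodd, circleIntegral.integral_const_mul,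
          pow_succ]
        ring

/-- for `R > 1`, `n ≥ 0` and `g` continuous on the circle `|ζ| = R` with
`g(-ζ) = g(ζ)` there, one has
`∮_{|ζ|=R} g(ζ)/((ζ-1)^{1/2}(ζ+1)^{1/2}(ζ+1)^{n+1}) dζ
  = (-1)^{n+1} ∮_{|ζ|=R} g(ζ)/((ζ-1)^{1/2}(ζ+1)^{1/2}(ζ-1)^{n+1}) dζ`. -/
theorem circle_integral_even_symmetry (R : ℝ) (hR : 1 < R) (n : ℕ) (g : ℂ → ℂ)
    (hgc : ContinuousOn g (Metric.sphere (0 : ℂ) R))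
    (hge : ∀ ζ : ℂ, ‖ζ‖ = R → g (-ζ) = g ζ) :
    (∮ ζ in C(0, R), g ζ /
        ((ζ - 1) ^ (1 / 2 : ℂ) * (ζ + 1) ^ (1 / 2 : ℂ) * (ζ + 1) ^ (n + 1)))
      = (-1) ^ (n + 1) *
        ∮ ζ in C(0, R), g ζ /
          ((ζ - 1) ^ (1 / 2 : ℂ) * (ζ + 1) ^ (1 / 2 : ℂ) * (ζ - 1) ^ (n + 1)) :=
  circle_integral_even_symmetry_general R hR n g hge
end
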